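/- Let Z ⊆ ℝⁿ be nonempty convex and h be 2ς-strongly convex and 2ζ-smooth on Z. Fix u ∈ Z, υ ≥ ζ, and let v = argmin_{z∈Z} { ∇h(u)ᵀ(z-u) + υ‖z-u‖² } and w = argmin_{z∈Z} h(z). Then ‖w - v‖² ≤ ((υ-ς)/(υ+ς)) ‖w - u‖². -/

import Mathlib

/-!
Both minimality conditions are used in first-order form: `v` satisfies the variational
inequality `⟪∇h(u) + 2υ(v - u), w - v⟫ ≥ 0` of the quadratic model, and `w` satisfies
`⟪∇h(w), v - w⟫ ≥ 0`, which with strong convexity at `w` sharpens `h w ≤ h v` to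
`h w + ς‖w - v‖² ≤ h v`. Adding strong convexity from `u` to `w` and smoothness from `u` to `v`
eliminates `h` and leaves `(υ + ς)‖w - v‖² ≤ (υ - ς)‖w - u‖² + (ζ - υ)‖v - u‖²`.
-/

open Set Filter Topology
open scoped RealInnerProductSpace

variable {E : Type*} [NormedAddCommGroup E] [InnerProductSpace ℝ E]

/-- The objective of one projected-gradient step from `c` with gradient `g`. -/
def quadModel (g c : E) (υ : ℝ) (z : E) : ℝ :=
  ⟪g, z - c⟫ + υ * ‖z - c‖ ^ 2

theorem quadModel_eq_add (g c : E) (υ : ℝ) (x z : E) :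
    quadModel g c υ z =
      quadModel g c υ x + ⟪g + (2 * υ) • (x - c), z - x⟫ + υ * ‖z - x‖ ^ 2 := by
  have hzc : z - c = (z - x) + (x - c) := by abel
  simp only [quadModel, hzc, norm_add_sq_real, inner_add_left, inner_add_right,
    real_inner_smul_left, real_inner_comm (z - x) (x - c)]
  ring

theorem IsMinOn.inner_nonneg_of_le_quadratic {f : E → ℝ} {Z : Set E} {x z G : E} {L : ℝ}
    (hZ : Convex ℝ Z) (hxZ : x ∈ Z) (hx : IsMinOn f Z x)
    (hf : ∀ y ∈ Z, f y ≤ f x + ⟪G, y - x⟫ + L * ‖y - x‖ ^ 2) (hz : z ∈ Z) :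
    0 ≤ ⟪G, z - x⟫ := by
  have along_segment : ∀ t ∈ Ioo (0 : ℝ) 1, 0 ≤ ⟪G, z - x⟫ + t * (L * ‖z - x‖ ^ 2) := by
    intro t ht
    have hy : x + t • (z - x) ∈ Z := hZ.add_smul_sub_mem hxZ hz (Ioo_subset_Icc_self ht)
    have hle := (isMinOn_iff.1 hx _ hy).trans (hf _ hy)
    rw [add_sub_cancel_left, real_inner_smul_right, norm_smul, Real.norm_eq_abs, mul_pow,
      sq_abs] at hle
    exact nonneg_of_mul_nonneg_right (by linarith) ht.1
  have hlim : Tendsto (fun t : ℝ => ⟪G, z - x⟫ + t * (L * ‖z - x‖ ^ 2)) (𝓝[>] 0)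
      (𝓝 ⟪G, z - x⟫) := by
    have hcont : Continuous fun t : ℝ => ⟪G, z - x⟫ + t * (L * ‖z - x‖ ^ 2) := by fun_prop
    simpa using (hcont.tendsto 0).mono_left nhdsWithin_le_nhds
  exact ge_of_tendsto hlim (mem_of_superset (Ioo_mem_nhdsGT one_pos) along_segment)

theorem one_step_contraction_general (n : ℕ) (Z : Set (EuclideanSpace ℝ (Fin n)))
    (hZ : Convex ℝ Z)
    (h : EuclideanSpace ℝ (Fin n) → ℝ)
    (gradh : EuclideanSpace ℝ (Fin n) → EuclideanSpace ℝ (Fin n))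
    (ς ζ υ : ℝ) (hς : 0 < ς) (hζ : 0 < ζ) (hυ : ζ ≤ υ)
    (hstrong : ∀ x ∈ Z, ∀ y ∈ Z,
      h x + inner ℝ (gradh x) (y - x) + ς * ‖y - x‖ ^ 2 ≤ h y)
    (hsmooth : ∀ x ∈ Z, ∀ y ∈ Z,
      h y ≤ h x + inner ℝ (gradh x) (y - x) + ζ * ‖y - x‖ ^ 2)
    (u : EuclideanSpace ℝ (Fin n)) (huZ : u ∈ Z)
    (v : EuclideanSpace ℝ (Fin n)) (hvZ : v ∈ Z)
    (hvmin : ∀ z ∈ Z,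
      inner ℝ (gradh u) (v - u) + υ * ‖v - u‖ ^ 2 ≤
        inner ℝ (gradh u) (z - u) + υ * ‖z - u‖ ^ 2)
    (w : EuclideanSpace ℝ (Fin n)) (hwZ : w ∈ Z)
    (hwmin : ∀ z ∈ Z, h w ≤ h z) :
    ‖w - v‖ ^ 2 ≤ ((υ - ς) / (υ + ς)) * ‖w - u‖ ^ 2 := by
  have hv_variational : 0 ≤ ⟪gradh u + (2 * υ) • (v - u), w - v⟫ :=
    IsMinOn.inner_nonneg_of_le_quadratic (f := quadModel (gradh u) u υ) hZ hvZ
      (isMinOn_iff.2 hvmin) (fun z _ => (quadModel_eq_add _ _ _ v z).le) hwZ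
  have hw_first_order : 0 ≤ ⟪gradh w, v - w⟫ :=
    IsMinOn.inner_nonneg_of_le_quadratic hZ hwZ (isMinOn_iff.2 hwmin) (hsmooth w hwZ) hvZ
  have hw_sharp := hstrong w hwZ v hvZ
  have hu_strong := hstrong u huZ w hwZ
  have hu_smooth := hsmooth u huZ v hvZ
  have hwu : w - u = (w - v) + (v - u) := by abel
  rw [inner_add_left, real_inner_smul_left] at hv_variational
  rw [hwu, inner_add_right, norm_add_sq_real] at hu_strong
  rw [norm_sub_rev v w] at hw_sharp
  rw [hwu, norm_add_sq_real, div_mul_eq_mul_div, le_div_iff₀ (by linarith)]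
  nlinarith [mul_le_mul_of_nonneg_right hυ (sq_nonneg ‖v - u‖), real_inner_comm (w - v) (v - u)]

theorem one_step_contraction (n : ℕ) (Z : Set (EuclideanSpace ℝ (Fin n)))
    (hZne : Z.Nonempty) (hZ : Convex ℝ Z)
    (h : EuclideanSpace ℝ (Fin n) → ℝ)
    (gradh : EuclideanSpace ℝ (Fin n) → EuclideanSpace ℝ (Fin n))
    (ς ζ υ : ℝ) (hς : 0 < ς) (hζ : 0 < ζ) (hυ : ζ ≤ υ)
    (hstrong : ∀ x ∈ Z, ∀ y ∈ Z,
      h x + inner ℝ (gradh x) (y - x) + ς * ‖y - x‖ ^ 2 ≤ h y)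
    (hsmooth : ∀ x ∈ Z, ∀ y ∈ Z,
      h y ≤ h x + inner ℝ (gradh x) (y - x) + ζ * ‖y - x‖ ^ 2)
    (u : EuclideanSpace ℝ (Fin n)) (huZ : u ∈ Z)
    (v : EuclideanSpace ℝ (Fin n)) (hvZ : v ∈ Z)
    (hvmin : ∀ z ∈ Z,
      inner ℝ (gradh u) (v - u) + υ * ‖v - u‖ ^ 2 ≤
        inner ℝ (gradh u) (z - u) + υ * ‖z - u‖ ^ 2)
    (w : EuclideanSpace ℝ (Fin n)) (hwZ : w ∈ Z)
    (hwmin : ∀ z ∈ Z, h w ≤ h z) :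
    ‖w - v‖ ^ 2 ≤ ((υ - ς) / (υ + ς)) * ‖w - u‖ ^ 2 :=
  one_step_contraction_general n Z hZ h gradh ς ζ υ hς hζ hυ hstrong hsmooth u huZ v hvZ hvmin w hwZ
    hwmin
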